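/- Let F_θ be a symmetric positive definite p×p matrix, F_η a symmetric positive definite m×m matrix, and A a p×m matrix such that the block matrix F² = [[F_θ², A], [Aᵀ, F_η²]] is positive definite. Fix Y = (Y_θ, Y_η) ∈ ℝ^p × ℝ^m and let L(θ, η) = −½ ((θ,η) − Y)ᵀ F² ((θ,η) − Y). Given any starting point θ₀ ∈ ℝ^p, define recursively for k ≥ 1: η_k as the unique maximizer of η ↦ L(θ_{k−1}, η) and θ_k as the unique maximizer of θ ↦ L(θ, η_k); these maximizers exist and are unique. Then with M₀ := F_θ⁻¹ A F_η⁻² Aᵀ F_θ⁻¹ one has for every k ≥ 0 the identity F_θ(θ_k − Y_θ) = M₀ᵏ F_θ(θ₀ − Y_θ); in particular, if ν := ‖M₀‖ < 1 (spectral norm), then ‖F_θ(θ_k − θ̃)‖ ≤ νᵏ ‖F_θ(θ₀ − θ̃)‖, where (θ̃, η̃) = Y is the unique global maximizer of L. -/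

import Mathlib

/-!
Completing the square in `η` gives
`L(θ, η) = L(θ, η*(θ)) − ½ (η − η*(θ))ᵀ F_η² (η − η*(θ))` with `η*(θ) = Y_η − F_η⁻² Aᵀ (θ − Y_θ)`,
and `F_η²`, a diagonal block of `F²`, is positive definite; so `η*(θ)` is the unique maximizer.
The same holds with the roles of `θ` and `η` exchanged. Composing the two steps gives the linear
recursion `θ_{k+1} − Y_θ = F_θ⁻² A F_η⁻² Aᵀ (θ_k − Y_θ)`, which becomes multiplication by `M₀`
after conjugation by `F_θ`; the bound then follows from `‖M₀ᵏ v‖ ≤ ‖M₀‖ᵏ ‖v‖`.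
-/

open Matrix

/-- Euclidean norm of a vector in `ℝ^n`. -/
noncomputable def euclNorm {n : Type*} [Fintype n] (v : n → ℝ) : ℝ :=
  Real.sqrt (∑ i, v i ^ 2)

/-- Spectral (L2 operator) norm of a real matrix. -/
noncomputable def specNorm {m n : Type*} [Fintype m] [Fintype n] [DecidableEq n]
    (M : Matrix m n ℝ) : ℝ :=
  ‖LinearMap.toContinuousLinearMap (Matrix.toEuclideanLin M)‖

lemma euclNorm_eq_norm_toLp {n : Type*} [Fintype n] (v : n → ℝ) :
    euclNorm v = ‖WithLp.toLp 2 v‖ := by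
  simp [euclNorm, EuclideanSpace.norm_eq, Real.norm_eq_abs, sq_abs]

section SpectralNorm

variable {m n : Type*} [Fintype m] [Fintype n] [DecidableEq n]

lemma euclNorm_mulVec_le (M : Matrix m n ℝ) (v : n → ℝ) :
    euclNorm (M *ᵥ v) ≤ specNorm M * euclNorm v := by
  rw [euclNorm_eq_norm_toLp, euclNorm_eq_norm_toLp]
  exact (LinearMap.toContinuousLinearMap (toEuclideanLin M)).le_opNorm (WithLp.toLp 2 v)

lemma euclNorm_pow_mulVec_le (M : Matrix n n ℝ) (v : n → ℝ) (k : ℕ) :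
    euclNorm ((M ^ k) *ᵥ v) ≤ specNorm M ^ k * euclNorm v := by
  induction k with
  | zero => simp
  | succ k ih =>
    calc euclNorm ((M ^ (k + 1)) *ᵥ v) = euclNorm (M *ᵥ (M ^ k) *ᵥ v) := by
          rw [pow_succ', mulVec_mulVec]
      _ ≤ specNorm M * (specNorm M ^ k * euclNorm v) :=
          (euclNorm_mulVec_le M _).trans (mul_le_mul_of_nonneg_left ih (norm_nonneg _))
      _ = specNorm M ^ (k + 1) * euclNorm v := by ring

end SpectralNorm

lemma mulVec_eq_pow_mulVec_of_succ {n α : Type*} [Fintype n] [DecidableEq n] [CommSemiring α]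
    {M : Matrix n n α} {u : ℕ → n → α} (hu : ∀ k, u (k + 1) = M *ᵥ u k) (k : ℕ) :
    u k = (M ^ k) *ᵥ u 0 := by
  induction k with
  | zero => simp
  | succ k ih => rw [hu, ih, mulVec_mulVec, pow_succ']

lemma mulVec_mul_self_inv_mul {n α : Type*} [Fintype n] [DecidableEq n] [CommRing α]
    {F : Matrix n n α} (hF : IsUnit F.det) (N : Matrix n n α) (v : n → α) :
    F *ᵥ ((F * F)⁻¹ * N) *ᵥ v = (F⁻¹ * N * F⁻¹) *ᵥ F *ᵥ v := by
  rw [mulVec_mulVec, mulVec_mulVec, Matrix.mul_inv_rev, Matrix.mul_assoc (F⁻¹ * N),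
    nonsing_inv_mul _ hF, Matrix.mul_one, ← Matrix.mul_assoc, ← Matrix.mul_assoc,
    mul_nonsing_inv _ hF, Matrix.one_mul]

section Block

variable {ι κ : Type*} [Fintype ι] [Fintype κ]
  (P : Matrix ι ι ℝ) (A : Matrix ι κ ℝ) (D : Matrix κ κ ℝ)

lemma sumElim_dotProduct_fromBlocks_mulVec (x : ι → ℝ) (y : κ → ℝ) :
    Sum.elim x y ⬝ᵥ fromBlocks P A Aᵀ D *ᵥ Sum.elim x y
      = x ⬝ᵥ P *ᵥ x + 2 * (x ⬝ᵥ A *ᵥ y) + y ⬝ᵥ D *ᵥ y := by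
  rw [fromBlocks_mulVec, sumElim_dotProduct_sumElim, Sum.elim_comp_inl, Sum.elim_comp_inr,
    dotProduct_add, dotProduct_add, dotProduct_transpose_mulVec]
  ring

noncomputable def quadLik (Yθ : ι → ℝ) (Yη : κ → ℝ) (θ : ι → ℝ) (η : κ → ℝ) : ℝ :=
  -(1 / 2) * ((Sum.elim θ η - Sum.elim Yθ Yη) ⬝ᵥ
    fromBlocks P A Aᵀ D *ᵥ (Sum.elim θ η - Sum.elim Yθ Yη))

variable {P A D} (Yθ : ι → ℝ) (Yη : κ → ℝ)

lemma quadLik_eq (θ : ι → ℝ) (η : κ → ℝ) :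
    quadLik P A D Yθ Yη θ η = -(1 / 2) * ((θ - Yθ) ⬝ᵥ P *ᵥ (θ - Yθ)
      + 2 * ((θ - Yθ) ⬝ᵥ A *ᵥ (η - Yη)) + (η - Yη) ⬝ᵥ D *ᵥ (η - Yη)) := by
  rw [quadLik, ← Sum.elim_sub_sub, sumElim_dotProduct_fromBlocks_mulVec]

lemma quadLik_swap (θ : ι → ℝ) (η : κ → ℝ) :
    quadLik D Aᵀ P Yη Yθ η θ = quadLik P A D Yθ Yη θ η := by
  rw [quadLik_eq, quadLik_eq, dotProduct_transpose_mulVec]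
  ring

lemma quadLik_le_quadLik_center (hB : (fromBlocks P A Aᵀ D).PosSemidef) (θ : ι → ℝ)
    (η : κ → ℝ) : quadLik P A D Yθ Yη θ η ≤ quadLik P A D Yθ Yη Yθ Yη := by
  have := hB.dotProduct_mulVec_nonneg (Sum.elim θ η - Sum.elim Yθ Yη)
  simp only [star_trivial] at this
  simp only [quadLik, sub_self, mulVec_zero, dotProduct_zero, mul_zero]
  linarith

lemma eq_center_of_quadLik_le (hB : (fromBlocks P A Aᵀ D).PosDef) {θ : ι → ℝ} {η : κ → ℝ}
    (h : quadLik P A D Yθ Yη Yθ Yη ≤ quadLik P A D Yθ Yη θ η) : θ = Yθ ∧ η = Yη := by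
  by_contra hne
  have := hB.dotProduct_mulVec_pos (sub_ne_zero.mpr (mt Sum.elim_eq_iff.mp hne))
  simp only [star_trivial] at this
  simp only [quadLik, sub_self, mulVec_zero, dotProduct_zero, mul_zero] at h
  linarith

lemma add_two_mul_dotProduct_mulVec_eq (hD : D.IsHermitian) (x : ι → ℝ) (y z : κ → ℝ)
    (hz : D *ᵥ z = -(Aᵀ *ᵥ x)) :
    2 * (x ⬝ᵥ A *ᵥ y) + y ⬝ᵥ D *ᵥ y
      = 2 * (x ⬝ᵥ A *ᵥ z) + z ⬝ᵥ D *ᵥ z + (y - z) ⬝ᵥ D *ᵥ (y - z) := by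
  have hsymm (u v : κ → ℝ) : u ⬝ᵥ D *ᵥ v = v ⬝ᵥ D *ᵥ u := by
    rw [← dotProduct_transpose_mulVec, ← conjTranspose_eq_transpose_of_trivial, hD.eq]
  have hcross (u : κ → ℝ) : x ⬝ᵥ A *ᵥ u = -(z ⬝ᵥ D *ᵥ u) := by
    rw [← dotProduct_transpose_mulVec, hsymm, hz, dotProduct_neg, neg_neg]
  simp only [hcross, mulVec_sub, dotProduct_sub, sub_dotProduct, hsymm z y]
  ring

noncomputable def blockArgmax [DecidableEq κ] (A : Matrix ι κ ℝ) (D : Matrix κ κ ℝ)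
    (Yθ : ι → ℝ) (Yη : κ → ℝ) (θ : ι → ℝ) : κ → ℝ :=
  Yη - D⁻¹ *ᵥ Aᵀ *ᵥ (θ - Yθ)

lemma quadLik_eq_quadLik_blockArgmax_sub [DecidableEq κ] (hD : D.IsHermitian)
    (hDu : IsUnit D.det) (θ : ι → ℝ) (η : κ → ℝ) :
    quadLik P A D Yθ Yη θ η = quadLik P A D Yθ Yη θ (blockArgmax A D Yθ Yη θ)
      - 1 / 2 * ((η - blockArgmax A D Yθ Yη θ) ⬝ᵥ D *ᵥ (η - blockArgmax A D Yθ Yη θ)) := by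
  have hz : D *ᵥ (blockArgmax A D Yθ Yη θ - Yη) = -(Aᵀ *ᵥ (θ - Yθ)) := by
    rw [blockArgmax, sub_sub_cancel_left, mulVec_neg, mulVec_mulVec, mul_nonsing_inv _ hDu,
      one_mulVec]
  rw [quadLik_eq, quadLik_eq, ← sub_sub_sub_cancel_right η (blockArgmax A D Yθ Yη θ) Yη]
  linear_combination (-(1 / 2) : ℝ) * add_two_mul_dotProduct_mulVec_eq hD _ (η - Yη) _ hz

lemma quadLik_le_quadLik_blockArgmax [DecidableEq κ] (hD : D.PosDef) (θ : ι → ℝ) (η : κ → ℝ) :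
    quadLik P A D Yθ Yη θ η ≤ quadLik P A D Yθ Yη θ (blockArgmax A D Yθ Yη θ) := by
  rw [quadLik_eq_quadLik_blockArgmax_sub Yθ Yη hD.isHermitian hD.det_pos.ne'.isUnit θ η]
  have := hD.posSemidef.dotProduct_mulVec_nonneg (η - blockArgmax A D Yθ Yη θ)
  simp only [star_trivial] at this
  linarith

lemma eq_blockArgmax_of_quadLik_le [DecidableEq κ] (hD : D.PosDef) {θ : ι → ℝ} {η : κ → ℝ}
    (h : quadLik P A D Yθ Yη θ (blockArgmax A D Yθ Yη θ) ≤ quadLik P A D Yθ Yη θ η) :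
    η = blockArgmax A D Yθ Yη θ := by
  rw [quadLik_eq_quadLik_blockArgmax_sub Yθ Yη hD.isHermitian hD.det_pos.ne'.isUnit θ η] at h
  by_contra hne
  have := hD.dotProduct_mulVec_pos (sub_ne_zero.mpr hne)
  simp only [star_trivial] at this
  linarith

lemma quadLik_le_quadLik_blockArgmax_fst [DecidableEq ι] (hP : P.PosDef) (θ : ι → ℝ)
    (η : κ → ℝ) :
    quadLik P A D Yθ Yη θ η ≤ quadLik P A D Yθ Yη (blockArgmax Aᵀ P Yη Yθ η) η := by
  simpa only [quadLik_swap] using quadLik_le_quadLik_blockArgmax (A := Aᵀ) Yη Yθ hP η θ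

lemma eq_blockArgmax_fst_of_quadLik_le [DecidableEq ι] (hP : P.PosDef) {θ : ι → ℝ}
    {η : κ → ℝ}
    (h : quadLik P A D Yθ Yη (blockArgmax Aᵀ P Yη Yθ η) η ≤ quadLik P A D Yθ Yη θ η) :
    θ = blockArgmax Aᵀ P Yη Yθ η :=
  eq_blockArgmax_of_quadLik_le (A := Aᵀ) Yη Yθ hP (by simpa only [quadLik_swap] using h)

lemma blockArgmax_blockArgmax_sub [DecidableEq ι] [DecidableEq κ] (θ : ι → ℝ) :
    blockArgmax Aᵀ P Yη Yθ (blockArgmax A D Yθ Yη θ) - Yθ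
      = (P⁻¹ * (A * D⁻¹ * Aᵀ)) *ᵥ (θ - Yθ) := by
  simp only [blockArgmax, sub_sub_cancel_left, transpose_transpose,
    mulVec_neg, neg_neg, mulVec_mulVec, Matrix.mul_assoc]

end Block

theorem stmt1_general {p m : ℕ} (Fθ : Matrix (Fin p) (Fin p) ℝ) (Fη : Matrix (Fin m) (Fin m) ℝ)
    (A : Matrix (Fin p) (Fin m) ℝ)
    (hF2 : (Matrix.fromBlocks (Fθ * Fθ) A Aᵀ (Fη * Fη)).PosDef)
    (Yθ : Fin p → ℝ) (Yη : Fin m → ℝ) (θ₀ : Fin p → ℝ)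
    (L : (Fin p → ℝ) → (Fin m → ℝ) → ℝ)
    (hL : ∀ θ η, L θ η = -(1/2) * ((Sum.elim θ η - Sum.elim Yθ Yη) ⬝ᵥ
        (Matrix.fromBlocks (Fθ * Fθ) A Aᵀ (Fη * Fη)).mulVec (Sum.elim θ η - Sum.elim Yθ Yη)))
    (M₀ : Matrix (Fin p) (Fin p) ℝ)
    (hM₀ : M₀ = Fθ⁻¹ * A * (Fη * Fη)⁻¹ * Aᵀ * Fθ⁻¹) :
    -- existence and uniqueness of the stepwise maximizers
    (∀ θ, ∃! ηm, ∀ η, L θ η ≤ L θ ηm) ∧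
    (∀ η, ∃! θm, ∀ θ, L θ η ≤ L θm η) ∧
    -- (θ̃, η̃) = Y is the unique global maximizer of L
    (∀ θ η, L θ η ≤ L Yθ Yη) ∧
    (∀ θ η, (∀ θ' η', L θ' η' ≤ L θ η) → θ = Yθ ∧ η = Yη) ∧
    -- the identity for the alternating sequence, and geometric convergence
    (∀ θ : ℕ → Fin p → ℝ, ∀ η : ℕ → Fin m → ℝ, θ 0 = θ₀ →
      (∀ k, ∀ η', L (θ k) η' ≤ L (θ k) (η (k + 1))) →
      (∀ k, ∀ θ', L θ' (η (k + 1)) ≤ L (θ (k + 1)) (η (k + 1))) →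
      ∀ k, Fθ.mulVec (θ k - Yθ) = (M₀ ^ k).mulVec (Fθ.mulVec (θ₀ - Yθ)) ∧
        (specNorm M₀ < 1 →
          euclNorm (Fθ.mulVec (θ k - Yθ))
            ≤ specNorm M₀ ^ k * euclNorm (Fθ.mulVec (θ₀ - Yθ)))) := by
  obtain rfl : L = quadLik (Fθ * Fθ) A (Fη * Fη) Yθ Yη := funext fun θ => funext (hL θ)
  have hP : (Fθ * Fθ).PosDef := hF2.submatrix Sum.inl_injective
  have hD : (Fη * Fη).PosDef := hF2.submatrix Sum.inr_injective
  have hFθ : IsUnit Fθ.det := isUnit_of_mul_isUnit_left (det_mul Fθ Fθ ▸ hP.det_pos.ne'.isUnit)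
  refine ⟨fun θ => ⟨_, quadLik_le_quadLik_blockArgmax Yθ Yη hD θ,
      fun η h => eq_blockArgmax_of_quadLik_le Yθ Yη hD (h _)⟩,
    fun η => ⟨_, fun θ => quadLik_le_quadLik_blockArgmax_fst Yθ Yη hP θ η,
      fun θ h => eq_blockArgmax_fst_of_quadLik_le Yθ Yη hP (h _)⟩,
    quadLik_le_quadLik_center Yθ Yη hF2.posSemidef,
    fun θ η h => eq_center_of_quadLik_le Yθ Yη hF2 (h _ _), ?_⟩
  intro θ η hθ₀ hη hθ k
  have hstep (k : ℕ) : Fθ *ᵥ (θ (k + 1) - Yθ) = M₀ *ᵥ Fθ *ᵥ (θ k - Yθ) := by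
    rw [eq_blockArgmax_fst_of_quadLik_le Yθ Yη hP (hθ k _),
      eq_blockArgmax_of_quadLik_le Yθ Yη hD (hη k _), blockArgmax_blockArgmax_sub,
      mulVec_mul_self_inv_mul hFθ, hM₀]
    simp only [Matrix.mul_assoc]
  have horbit : Fθ *ᵥ (θ k - Yθ) = (M₀ ^ k) *ᵥ Fθ *ᵥ (θ₀ - Yθ) :=
    hθ₀ ▸ mulVec_eq_pow_mulVec_of_succ (u := fun k => Fθ *ᵥ (θ k - Yθ)) hstep k
  exact ⟨horbit, fun _ => horbit ▸ euclNorm_pow_mulVec_le M₀ _ k⟩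

/-- Alternating maximization for the quadratic (toy Gaussian) functional
`L(θ, η) = −½ ((θ,η) − Y)ᵀ F² ((θ,η) − Y)`: the stepwise maximizers exist and are
unique, `Y` is the unique global maximizer, and with `M₀ = F_θ⁻¹ A F_η⁻² Aᵀ F_θ⁻¹`
one has `F_θ(θ_k − Y_θ) = M₀ᵏ F_θ(θ₀ − Y_θ)`; if `‖M₀‖ < 1` this yields geometric
convergence to `θ̃ = Y_θ`. -/
theorem stmt1 {p m : ℕ} (Fθ : Matrix (Fin p) (Fin p) ℝ) (Fη : Matrix (Fin m) (Fin m) ℝ)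
    (A : Matrix (Fin p) (Fin m) ℝ)
    (hFθ : Fθ.PosDef) (hFη : Fη.PosDef)
    (hF2 : (Matrix.fromBlocks (Fθ * Fθ) A Aᵀ (Fη * Fη)).PosDef)
    (Yθ : Fin p → ℝ) (Yη : Fin m → ℝ) (θ₀ : Fin p → ℝ)
    (L : (Fin p → ℝ) → (Fin m → ℝ) → ℝ)
    (hL : ∀ θ η, L θ η = -(1/2) * ((Sum.elim θ η - Sum.elim Yθ Yη) ⬝ᵥ
        (Matrix.fromBlocks (Fθ * Fθ) A Aᵀ (Fη * Fη)).mulVec (Sum.elim θ η - Sum.elim Yθ Yη)))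
    (M₀ : Matrix (Fin p) (Fin p) ℝ)
    (hM₀ : M₀ = Fθ⁻¹ * A * (Fη * Fη)⁻¹ * Aᵀ * Fθ⁻¹) :
    -- existence and uniqueness of the stepwise maximizers
    (∀ θ, ∃! ηm, ∀ η, L θ η ≤ L θ ηm) ∧
    (∀ η, ∃! θm, ∀ θ, L θ η ≤ L θm η) ∧
    -- (θ̃, η̃) = Y is the unique global maximizer of L
    (∀ θ η, L θ η ≤ L Yθ Yη) ∧
    (∀ θ η, (∀ θ' η', L θ' η' ≤ L θ η) → θ = Yθ ∧ η = Yη) ∧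
    -- the identity for the alternating sequence, and geometric convergence
    (∀ θ : ℕ → Fin p → ℝ, ∀ η : ℕ → Fin m → ℝ, θ 0 = θ₀ →
      (∀ k, ∀ η', L (θ k) η' ≤ L (θ k) (η (k + 1))) →
      (∀ k, ∀ θ', L θ' (η (k + 1)) ≤ L (θ (k + 1)) (η (k + 1))) →
      ∀ k, Fθ.mulVec (θ k - Yθ) = (M₀ ^ k).mulVec (Fθ.mulVec (θ₀ - Yθ)) ∧
        (specNorm M₀ < 1 →
          euclNorm (Fθ.mulVec (θ k - Yθ))
            ≤ specNorm M₀ ^ k * euclNorm (Fθ.mulVec (θ₀ - Yθ)))) :=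
  stmt1_general Fθ Fη A hF2 Yθ Yη θ₀ L hL M₀ hM₀
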